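/- arXiv:2006.10921 — 2 statements merged into one kernel-verified Lean document; each statement's English description precedes it below -/
import Mathlib

section
/- Let f₁,…,f_M : ℝ^d → ℝ be twice differentiable, L-smooth, with bounded gradient variance E_{i∼p}‖∇f_i(w) - ∇f(w)‖² ≤ σ², where f = E_{i∼p} f_i and F(w) = E_{i∼p} f_i(w - α∇f_i(w)). If 0 < α < 1/(4L), then for any w with ‖∇F(w)‖ ≤ K one has ‖∇f(w)‖ ≤ (1/(1-2αL)) K + (2αL/(1-2αL)) σ ≤ 2K + σ. -/
/-!
Write `β = αL` and, for one task, `x = ∇fᵢ(w)`, `z = ∇fᵢ(w - αx)`. The gradient of the adapted loss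
`fᵢ(w - α∇fᵢ(w))` is `y = z - α Hᵀz` with `H` the Hessian of `fᵢ` at `w`, and smoothness gives
`‖x - z‖ ≤ β‖x‖` and `‖αHᵀz‖ ≤ β‖z‖`. Comparing `x` with `y / (1 + β²)` instead of `y`, the terms
`⟪x, x - z⟫` cancel and one gets `‖x - y / (1 + β²)‖ ≤ 2β‖x‖`. Averaging over the tasks and using
`E‖xᵢ‖ ≤ E‖xᵢ - ∇f(w)‖ + ‖∇f(w)‖ ≤ σ + ‖∇f(w)‖` gives `(1 - 2β)‖∇f(w)‖ ≤ ‖∇F(w)‖ + 2βσ`.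
-/

open InnerProductSpace Finset
open scoped RealInnerProductSpace

lemma sum_mul_le_of_sum_mul_sq_le {ι : Type*} [Fintype ι] {p a : ι → ℝ} {σ : ℝ}
    (hp : ∀ i, 0 ≤ p i) (hp1 : ∑ i, p i = 1) (hσ : 0 ≤ σ) (h : ∑ i, p i * a i ^ 2 ≤ σ ^ 2) :
    ∑ i, p i * a i ≤ σ := by
  refine le_of_sq_le_sq ?_ hσ
  calc (∑ i, p i * a i) ^ 2 ≤ (∑ i, p i) * ∑ i, p i * a i ^ 2 :=
        sum_sq_le_sum_mul_sum_of_sq_le_mul _ (fun i _ => hp i)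
          (fun i _ => mul_nonneg (hp i) (sq_nonneg _)) (fun i _ => le_of_eq (by ring))
    _ ≤ σ ^ 2 := by rwa [hp1, one_mul]

lemma le_one_div_one_sub_mul_add_div_one_sub_mul {t s K σ : ℝ} (ht : t < 1)
    (h : (1 - t) * s ≤ K + t * σ) : s ≤ 1 / (1 - t) * K + t / (1 - t) * σ := by
  rw [div_mul_eq_mul_div, div_mul_eq_mul_div, ← add_div, le_div_iff₀ (by linarith)]
  linarith

lemma one_div_one_sub_mul_add_div_one_sub_mul_le {t K σ : ℝ} (ht : t ≤ 1 / 2)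
    (hK : 0 ≤ K) (hσ : 0 ≤ σ) : 1 / (1 - t) * K + t / (1 - t) * σ ≤ 2 * K + σ := by
  rw [div_mul_eq_mul_div, div_mul_eq_mul_div, ← add_div, div_le_iff₀ (by linarith)]
  have h2t : 0 ≤ 1 - 2 * t := by linarith
  nlinarith [mul_nonneg hK h2t, mul_nonneg hσ h2t]

section InnerProductSpace

variable {E : Type*} [NormedAddCommGroup E] [InnerProductSpace ℝ E]

lemma norm_sq_smul_add_add_mul_norm_sub_le {β : ℝ} (hβ : 0 ≤ β) {x v : E} (hv : ‖v‖ ≤ β * ‖x‖) :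
    ‖β ^ 2 • x + v‖ + β * ‖x - v‖ ≤ 2 * β * √(1 + β ^ 2) * ‖x‖ := by
  have hsq : ‖β ^ 2 • x + v‖ ^ 2 + (β * ‖x - v‖) ^ 2
      = (1 + β ^ 2) * (β ^ 2 * ‖x‖ ^ 2 + ‖v‖ ^ 2) := by
    rw [mul_pow, norm_add_sq_real, norm_sub_sq_real, real_inner_smul_left, norm_smul,
      Real.norm_of_nonneg (sq_nonneg β)]
    ring
  have hv2 : ‖v‖ ^ 2 ≤ β ^ 2 * ‖x‖ ^ 2 := by
    rw [← mul_pow]; exact pow_le_pow_left₀ (norm_nonneg v) hv 2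
  have hc : √(1 + β ^ 2) ^ 2 = 1 + β ^ 2 := Real.sq_sqrt (by positivity)
  apply le_of_sq_le_sq _ (by positivity)
  calc (‖β ^ 2 • x + v‖ + β * ‖x - v‖) ^ 2
      ≤ 2 * (‖β ^ 2 • x + v‖ ^ 2 + (β * ‖x - v‖) ^ 2) := by
        nlinarith [sq_nonneg (‖β ^ 2 • x + v‖ - β * ‖x - v‖)]
    _ ≤ (2 * β * √(1 + β ^ 2) * ‖x‖) ^ 2 := by
        rw [hsq, mul_pow, mul_pow, mul_pow, hc]
        nlinarith [sq_nonneg β]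

lemma norm_sub_inv_smul_sub_le {β : ℝ} (hβ : 0 ≤ β) {x z u : E}
    (hz : ‖x - z‖ ≤ β * ‖x‖) (hu : ‖u‖ ≤ β * ‖z‖) :
    ‖x - (1 + β ^ 2)⁻¹ • (z - u)‖ ≤ 2 * β * ‖x‖ := by
  have hc : 0 < 1 + β ^ 2 := by positivity
  have hsqrt : √(1 + β ^ 2) ≤ 1 + β ^ 2 :=
    Real.sqrt_le_self_iff.mpr (Or.inr (le_add_of_nonneg_right (sq_nonneg β)))
  have hsplit : x - (1 + β ^ 2)⁻¹ • (z - u) = (1 + β ^ 2)⁻¹ • ((β ^ 2 • x + (x - z)) + u) := by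
    rw [eq_comm, inv_smul_eq_iff₀ hc.ne', smul_sub, smul_inv_smul₀ hc.ne']
    module
  have hmain := norm_sq_smul_add_add_mul_norm_sub_le hβ hz
  rw [sub_sub_cancel] at hmain
  rw [hsplit, norm_smul, Real.norm_of_nonneg (inv_nonneg.mpr hc.le), inv_mul_le_iff₀ hc]
  calc ‖β ^ 2 • x + (x - z) + u‖ ≤ ‖β ^ 2 • x + (x - z)‖ + β * ‖z‖ := norm_add_le_of_le le_rfl hu
    _ ≤ 2 * β * √(1 + β ^ 2) * ‖x‖ := hmain
    _ ≤ (1 + β ^ 2) * (2 * β * ‖x‖) := by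
        nlinarith [mul_le_mul_of_nonneg_left hsqrt (by positivity : 0 ≤ 2 * β * ‖x‖)]

variable {ι : Type*} [Fintype ι] {p : ι → ℝ}

lemma sum_mul_norm_le_sum_mul_norm_sub_add_norm (hp : ∀ i, 0 ≤ p i) (hp1 : ∑ i, p i = 1)
    (x : ι → E) : ∑ i, p i * ‖x i‖ ≤ ∑ i, p i * ‖x i - ∑ j, p j • x j‖ + ‖∑ j, p j • x j‖ := by
  set S := ∑ j, p j • x j
  calc ∑ i, p i * ‖x i‖ ≤ ∑ i, (p i * ‖x i - S‖ + p i * ‖S‖) := by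
        gcongr with i
        rw [← mul_add]
        exact mul_le_mul_of_nonneg_left (norm_le_norm_sub_add (x i) S) (hp i)
    _ = ∑ i, p i * ‖x i - S‖ + ‖S‖ := by rw [sum_add_distrib, ← sum_mul, hp1, one_mul]

lemma mul_norm_sum_smul_le_of_norm_sub_smul_le (hp : ∀ i, 0 ≤ p i) (hp1 : ∑ i, p i = 1)
    {x y : ι → E} {c b σ : ℝ} (hc₀ : 0 ≤ c) (hc₁ : c ≤ 1) (hb : 0 ≤ b)
    (hxy : ∀ i, ‖x i - c • y i‖ ≤ b * ‖x i‖)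
    (hσ : ∑ i, p i * ‖x i - ∑ j, p j • x j‖ ≤ σ) :
    (1 - b) * ‖∑ i, p i • x i‖ ≤ ‖∑ i, p i • y i‖ + b * σ := by
  set S := ∑ j, p j • x j
  set G := ∑ j, p j • y j
  have hdiff : ‖S - c • G‖ ≤ b * ∑ i, p i * ‖x i‖ := by
    calc ‖S - c • G‖ = ‖∑ i, p i • (x i - c • y i)‖ := by
          simp only [S, G, smul_sum, ← sum_sub_distrib, smul_sub, smul_comm c]
      _ ≤ ∑ i, p i * (b * ‖x i‖) := by
          refine (norm_sum_le _ _).trans (sum_le_sum fun i _ => ?_)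
          rw [norm_smul, Real.norm_of_nonneg (hp i)]
          exact mul_le_mul_of_nonneg_left (hxy i) (hp i)
      _ = b * ∑ i, p i * ‖x i‖ := by rw [mul_sum]; exact sum_congr rfl fun i _ => by ring
  have hcG : ‖c • G‖ ≤ ‖G‖ := by
    rw [norm_smul, Real.norm_of_nonneg hc₀]
    exact mul_le_of_le_one_left (norm_nonneg G) hc₁
  have havg := sum_mul_norm_le_sum_mul_norm_sub_add_norm hp hp1 x
  have hS : ‖S‖ ≤ ‖c • G‖ + ‖S - c • G‖ := norm_le_norm_add_norm_sub' S (c • G)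
  nlinarith [mul_le_mul_of_nonneg_left (havg.trans (by linarith : _ ≤ σ + ‖S‖)) hb]

end InnerProductSpace

section Gradient

variable {E : Type*} [NormedAddCommGroup E] [InnerProductSpace ℝ E] [CompleteSpace E]

noncomputable def adaptedLoss (f : E → ℝ) (α : ℝ) (u : E) : ℝ := f (u - α • gradient f u)

lemma HasGradientAt.sum_mul {ι : Type*} [Fintype ι] {g : ι → E → ℝ} {g' : ι → E} {w : E}
    (c : ι → ℝ) (h : ∀ i, HasGradientAt (g i) (g' i) w) :
    HasGradientAt (fun u => ∑ i, c i * g i u) (∑ i, c i • g' i) w := by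
  rw [hasGradientAt_iff_hasFDerivAt, map_sum]
  simp only [map_smul]
  exact HasFDerivAt.fun_sum fun i _ => ((h i).hasFDerivAt).const_mul (c i)

lemma ContDiff.differentiable_gradient {f : E → ℝ} {n : WithTop ℕ∞} (hf : ContDiff ℝ n f)
    (hn : 2 ≤ n) : Differentiable ℝ (gradient f) :=
  ((toDual ℝ E).symm.toContinuousLinearEquiv.contDiff.comp
    (hf.fderiv_right (m := 1) (le_trans (by norm_num) hn))).differentiable one_ne_zero

lemma hasGradientAt_adaptedLoss {f : E → ℝ} {α : ℝ} {w : E}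
    (hf : DifferentiableAt ℝ f (w - α • gradient f w))
    (hg : DifferentiableAt ℝ (gradient f) w) :
    HasGradientAt (adaptedLoss f α)
      (gradient f (w - α • gradient f w) -
        α • (fderiv ℝ (gradient f) w).adjoint (gradient f (w - α • gradient f w))) w := by
  have hstep : HasFDerivAt (fun u => u - α • gradient f u)
      (ContinuousLinearMap.id ℝ E - α • fderiv ℝ (gradient f) w) w :=
    (hasFDerivAt_id w).sub (hg.hasFDerivAt.const_smul α)
  rw [hasGradientAt_iff_hasFDerivAt]
  refine (hf.hasGradientAt.hasFDerivAt.comp w hstep).congr_fderiv ?_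
  ext u
  simp only [ContinuousLinearMap.coe_comp, Function.comp_apply, toDual_apply_apply, sub_apply,
    smul_apply, ContinuousLinearMap.coe_id', id_eq]
  rw [inner_sub_left, inner_sub_right, real_inner_smul_left, real_inner_smul_right,
    ContinuousLinearMap.adjoint_inner_left]

lemma norm_gradient_sub_inv_smul_gradient_adaptedLoss_le {f : E → ℝ} {L α : ℝ}
    (hf : ContDiff ℝ 2 f) (hL : 0 ≤ L) (hα : 0 ≤ α)
    (hsmooth : ∀ w u, ‖gradient f w - gradient f u‖ ≤ L * ‖w - u‖) (w : E) :
    ‖gradient f w - (1 + (α * L) ^ 2)⁻¹ • gradient (adaptedLoss f α) w‖ ≤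
      2 * (α * L) * ‖gradient f w‖ := by
  set x := gradient f w
  set z := gradient f (w - α • x)
  set H := fderiv ℝ (gradient f) w
  have hH : ‖H‖ ≤ L :=
    norm_fderiv_le_of_lip' ℝ hL (Filter.Eventually.of_forall fun u => hsmooth u w)
  have hz : ‖x - z‖ ≤ α * L * ‖x‖ := by
    have := hsmooth w (w - α • x)
    rwa [sub_sub_cancel, norm_smul, Real.norm_of_nonneg hα, mul_left_comm, ← mul_assoc] at this
  have hu : ‖α • H.adjoint z‖ ≤ α * L * ‖z‖ := by
    rw [norm_smul, Real.norm_of_nonneg hα, mul_assoc]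
    gcongr
    calc ‖H.adjoint z‖ ≤ ‖H.adjoint‖ * ‖z‖ := H.adjoint.le_opNorm z
      _ ≤ L * ‖z‖ := by rw [LinearIsometryEquiv.norm_map]; gcongr
  rw [(hasGradientAt_adaptedLoss ((hf.differentiable two_ne_zero) _)
    (hf.differentiable_gradient le_rfl w)).gradient]
  exact norm_sub_inv_smul_sub_le (by positivity) hz hu

end Gradient

/-- with `0 < α < 1/(4L)`, a bound `‖∇F(w)‖ ≤ K` on the MAML-loss gradient
yields `‖∇f(w)‖ ≤ K/(1-2αL) + 2αLσ/(1-2αL) ≤ 2K + σ`. -/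
theorem stmt_4 {d M : ℕ} (f : Fin M → EuclideanSpace ℝ (Fin d) → ℝ) (p : Fin M → ℝ)
    (hp : ∀ i, 0 ≤ p i) (hp1 : ∑ i, p i = 1)
    (L σ α K : ℝ) (hL : 0 < L) (hσ : 0 ≤ σ)
    (hf : ∀ i, ContDiff ℝ 2 (f i))
    (hsmooth : ∀ i, ∀ w u : EuclideanSpace ℝ (Fin d),
      ‖gradient (f i) w - gradient (f i) u‖ ≤ L * ‖w - u‖)
    (favg : EuclideanSpace ℝ (Fin d) → ℝ) (hfavg : favg = fun w => ∑ i, p i * f i w)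
    (hvar : ∀ w : EuclideanSpace ℝ (Fin d),
      ∑ i, p i * ‖gradient (f i) w - gradient favg w‖ ^ 2 ≤ σ ^ 2)
    (F : EuclideanSpace ℝ (Fin d) → ℝ)
    (hF : F = fun w => ∑ i, p i * f i (w - α • gradient (f i) w))
    (hα : 0 < α) (hα2 : α < 1 / (4 * L))
    (w : EuclideanSpace ℝ (Fin d)) (hK : ‖gradient F w‖ ≤ K) :
    ‖gradient favg w‖ ≤ 1 / (1 - 2 * α * L) * K + (2 * α * L / (1 - 2 * α * L)) * σ ∧
    1 / (1 - 2 * α * L) * K + (2 * α * L / (1 - 2 * α * L)) * σ ≤ 2 * K + σ := by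
  subst hfavg hF
  have hK0 : 0 ≤ K := (norm_nonneg _).trans hK
  have hαL : 0 ≤ α * L := by positivity
  have hαL2 : 2 * α * L ≤ 1 / 2 := by
    rw [lt_div_iff₀ (by positivity)] at hα2
    linarith
  have hgrad_f : gradient (fun w => ∑ i, p i * f i w) w = ∑ i, p i • gradient (f i) w :=
    (HasGradientAt.sum_mul p fun i =>
      ((hf i).differentiable two_ne_zero w).hasGradientAt).gradient
  have hgrad_F : gradient (fun w => ∑ i, p i * f i (w - α • gradient (f i) w)) w =
      ∑ i, p i • gradient (adaptedLoss (f i) α) w :=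
    (HasGradientAt.sum_mul p fun i => (hasGradientAt_adaptedLoss
      ((hf i).differentiable two_ne_zero _)
      ((hf i).differentiable_gradient le_rfl w)).differentiableAt.hasGradientAt).gradient
  have hdev := sum_mul_le_of_sum_mul_sq_le hp hp1 hσ (hgrad_f ▸ hvar w)
  have hkey := mul_norm_sum_smul_le_of_norm_sub_smul_le hp hp1 (by positivity)
    (inv_le_one_of_one_le₀ (le_add_of_nonneg_right (sq_nonneg (α * L)))) (by positivity)
    (fun i => norm_gradient_sub_inv_smul_gradient_adaptedLoss_le (hf i) hL.le hα.le (hsmooth i) w)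
    hdev
  rw [hgrad_f, mul_assoc 2 α L]
  rw [hgrad_F] at hK
  exact ⟨le_one_div_one_sub_mul_add_div_one_sub_mul (by linarith) (by linarith),
    one_div_one_sub_mul_add_div_one_sub_mul_le (by linarith) hK0 hσ⟩
end

section
/- Let f₁,…,f_M : ℝ^d → ℝ be twice differentiable and L-smooth with gradient variance bound E_{i∼p}‖∇f_i(w) - ∇f(w)‖² ≤ σ², where f = E_{i∼p} f_i. Let F(w) = E_{i∼p} f_i(w - α∇f_i(w)) with 0 < α ≤ 1/L. Then for every w, ‖∇F(w)‖ ≤ σ + ‖∇f(w)‖. -/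
/-!
By the chain rule, `DF(w) = ∑ pᵢ • Dfᵢ(xᵢ) ∘ (I - α • D(∇fᵢ)(w))` with `xᵢ = w - α • ∇fᵢ(w)`.
For a convex function with `L`-Lipschitz gradient, first-order convexity and the descent lemma
`f y ≤ f x + ⟪∇f x, y - x⟫ + L‖y - x‖²` give co-coercivity
`‖∇f x - ∇f y‖² / (2L) ≤ ⟪∇f x - ∇f y, x - y⟫`; this constant is not sharp but suffices for
`α ≤ 1/L`. Co-coercivity shows that a gradient step does not increase `‖∇fᵢ‖`, and, differentiated,
that `‖I - α • D(∇fᵢ)(w)‖ ≤ 1`. Hence `‖∇F(w)‖ ≤ ∑ pᵢ ‖∇fᵢ(w)‖`, which Jensen's inequality bounds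
by `σ + ‖∇f(w)‖`.
-/

open scoped RealInnerProductSpace Gradient

lemma sum_mul_norm_le_add_of_sum_mul_sq_norm_sub_le {ι F : Type*} [Fintype ι]
    [SeminormedAddCommGroup F] {p : ι → ℝ} (hp : ∀ i, 0 ≤ p i) (hp1 : ∑ i, p i = 1)
    {a : ι → F} {A : F} {σ : ℝ} (hσ : 0 ≤ σ) (hvar : ∑ i, p i * ‖a i - A‖ ^ 2 ≤ σ ^ 2) :
    ∑ i, p i * ‖a i‖ ≤ σ + ‖A‖ := by
  have hjensen : (∑ i, p i * ‖a i - A‖) ^ 2 ≤ ∑ i, p i * ‖a i - A‖ ^ 2 := by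
    simpa only [smul_eq_mul] using (convexOn_pow 2).map_sum_le (t := Finset.univ)
      (fun i _ => hp i) hp1 (fun i _ => Set.mem_Ici.mpr (norm_nonneg (a i - A)))
  have hdev : ∑ i, p i * ‖a i - A‖ ≤ σ :=
    (pow_le_pow_iff_left₀ (Finset.sum_nonneg fun i _ => mul_nonneg (hp i) (norm_nonneg _)) hσ
      two_ne_zero).mp (hjensen.trans hvar)
  calc ∑ i, p i * ‖a i‖ ≤ ∑ i, p i * (‖a i - A‖ + ‖A‖) := by
        gcongr with i
        · exact hp i
        · exact norm_le_norm_sub_add (a i) A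
    _ = ∑ i, p i * ‖a i - A‖ + ‖A‖ := by
        simp only [mul_add, Finset.sum_add_distrib, ← Finset.sum_mul, hp1, one_mul]
    _ ≤ σ + ‖A‖ := by linarith

section
variable {E : Type*} [NormedAddCommGroup E] [InnerProductSpace ℝ E]

lemma norm_sub_le_of_sq_norm_le_two_inner {u h : E} (huh : ‖h‖ ^ 2 ≤ 2 * ⟪h, u⟫) :
    ‖u - h‖ ≤ ‖u‖ := by
  have hsq : ‖u - h‖ ^ 2 ≤ ‖u‖ ^ 2 := by
    rw [norm_sub_sq_real, real_inner_comm]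
    linarith
  exact pow_le_pow_iff_left₀ (norm_nonneg _) (norm_nonneg _) two_ne_zero |>.mp hsq

lemma mul_sq_norm_fderiv_apply_le_inner {G : E → E} {c : ℝ} {w : E}
    (hG : ∀ x y, c * ‖G x - G y‖ ^ 2 ≤ ⟪G x - G y, x - y⟫) (hd : DifferentiableAt ℝ G w)
    (v : E) : c * ‖fderiv ℝ G w v‖ ^ 2 ≤ ⟪fderiv ℝ G w v, v⟫ := by
  have hline : HasDerivAt (fun t : ℝ => w + t • v) v 0 := by
    simpa using ((hasDerivAt_id (0 : ℝ)).smul_const v).const_add w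
  have hG' : HasFDerivAt G (fderiv ℝ G w) (w + (0 : ℝ) • v) := by
    simpa using hd.hasFDerivAt
  have hslope := hasDerivAt_iff_tendsto_slope.mp (hG'.comp_hasDerivAt (0 : ℝ) hline)
  refine le_of_tendsto_of_tendsto' ((hslope.norm.pow 2).const_mul c)
    (hslope.inner tendsto_const_nhds) fun t => ?_
  have hΔ := hG (w + t • v) w
  rw [add_sub_cancel_left] at hΔ
  simp only [slope_def_module, Function.comp_apply, sub_zero, zero_smul, add_zero]
  set Δ := G (w + t • v) - G w
  calc c * ‖t⁻¹ • Δ‖ ^ 2 = t⁻¹ ^ 2 * (c * ‖Δ‖ ^ 2) := by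
        rw [norm_smul, mul_pow, Real.norm_eq_abs, sq_abs]; ring
    _ ≤ t⁻¹ ^ 2 * ⟪Δ, t • v⟫ := mul_le_mul_of_nonneg_left hΔ (sq_nonneg _)
    _ = ⟪t⁻¹ • Δ, v⟫ := by
        rw [real_inner_smul_right, real_inner_smul_left]
        rcases eq_or_ne t 0 with rfl | ht
        · simp
        · field_simp

variable [CompleteSpace E] {f : E → ℝ}

lemma ContDiff.differentiable_gradient_s8 (hf : ContDiff ℝ 2 f) : Differentiable ℝ (∇ f) :=
  (InnerProductSpace.toDual ℝ E).symm.differentiable.comp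
    ((hf.fderiv_right (m := 1) le_rfl).differentiable one_ne_zero)

lemma ConvexOn.add_inner_gradient_le (hc : ConvexOn ℝ Set.univ f) (hf : Differentiable ℝ f)
    (x y : E) : f x + ⟪∇ f x, y - x⟫ ≤ f y := by
  have hf' : HasFDerivAt f (fderiv ℝ f x) (AffineMap.lineMap x y (0 : ℝ)) := by
    simpa using (hf x).hasFDerivAt
  have hline := hf'.comp_hasDerivAt (0 : ℝ) AffineMap.hasDerivAt_lineMap
  have := (hc.comp_affineMap (AffineMap.lineMap x y)).le_slope_of_hasDerivAt
    (Set.mem_univ 0) (Set.mem_univ 1) one_pos hline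
  simp only [slope, sub_zero, inv_one, Function.comp_apply, AffineMap.lineMap_apply_one,
    AffineMap.lineMap_apply_zero, vsub_eq_sub, smul_eq_mul, one_mul] at this
  rw [← inner_gradient_left] at this
  linarith

lemma le_add_inner_gradient_add_sq_norm {L : ℝ} (hL : 0 ≤ L) (hf : Differentiable ℝ f)
    (hs : ∀ x y, ‖∇ f x - ∇ f y‖ ≤ L * ‖x - y‖) (x y : E) :
    f y ≤ f x + ⟪∇ f x, y - x⟫ + L * ‖y - x‖ ^ 2 := by
  have key : ‖f y - f x - fderiv ℝ f x (y - x)‖ ≤ L * ‖y - x‖ * ‖y - x‖ := by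
    refine Convex.norm_image_sub_le_of_norm_fderiv_le' (fun u _ => hf u) (fun u hu => ?_)
      (convex_segment x y) (left_mem_segment ℝ x y) (right_mem_segment ℝ x y)
    rw [← toDual_gradient, ← toDual_gradient, ← map_sub, LinearIsometryEquiv.norm_map]
    obtain ⟨t, ht, rfl⟩ := (segment_eq_image_lineMap ℝ x y ▸ hu)
    have hseg : ‖AffineMap.lineMap x y t - x‖ ≤ ‖y - x‖ := by
      rw [← vsub_eq_sub, AffineMap.lineMap_vsub_left, norm_smul, Real.norm_of_nonneg ht.1]
      exact mul_le_of_le_one_left (norm_nonneg _) ht.2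
    exact (hs _ x).trans (mul_le_mul_of_nonneg_left hseg hL)
  rw [← inner_gradient_left] at key
  have := (abs_le.mp (Real.norm_eq_abs _ ▸ key)).2
  nlinarith

lemma ConvexOn.add_inner_gradient_add_mul_sq_norm_le {L : ℝ} (hL : 0 < L)
    (hc : ConvexOn ℝ Set.univ f) (hf : Differentiable ℝ f)
    (hs : ∀ x y, ‖∇ f x - ∇ f y‖ ≤ L * ‖x - y‖) (x y : E) :
    f x + ⟪∇ f x, y - x⟫ + (4 * L)⁻¹ * ‖∇ f y - ∇ f x‖ ^ 2 ≤ f y := by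
  set d := ∇ f y - ∇ f x
  set t := (2 * L)⁻¹
  -- compare `f` at `z := y - t • d` from below (convexity at `x`) and from above (smoothness at `y`)
  have hlow := hc.add_inner_gradient_le hf x (y - t • d)
  have hup := le_add_inner_gradient_add_sq_norm hL.le hf hs y (y - t • d)
  have hzx : y - t • d - x = (y - x) - t • d := by abel
  have hzy : y - t • d - y = -(t • d) := by abel
  rw [hzx, inner_sub_right, real_inner_smul_right] at hlow
  rw [hzy, inner_neg_right, real_inner_smul_right, norm_neg, norm_smul, Real.norm_of_nonneg
    (by positivity)] at hup
  have hd : ⟪∇ f y, d⟫ - ⟪∇ f x, d⟫ = ‖d‖ ^ 2 := by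
    rw [← inner_sub_left, real_inner_self_eq_norm_sq]
  have ht : t - L * t ^ 2 = (4 * L)⁻¹ := by
    simp only [t]; field_simp; ring
  have key : (4 * L)⁻¹ * ‖d‖ ^ 2 = t * (⟪∇ f y, d⟫ - ⟪∇ f x, d⟫) - L * (t * ‖d‖) ^ 2 := by
    rw [hd, ← ht]; ring
  linarith

lemma ConvexOn.mul_sq_norm_gradient_sub_le_inner {L : ℝ} (hL : 0 < L)
    (hc : ConvexOn ℝ Set.univ f) (hf : Differentiable ℝ f)
    (hs : ∀ x y, ‖∇ f x - ∇ f y‖ ≤ L * ‖x - y‖) (x y : E) :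
    (2 * L)⁻¹ * ‖∇ f x - ∇ f y‖ ^ 2 ≤ ⟪∇ f x - ∇ f y, x - y⟫ := by
  have hxy := hc.add_inner_gradient_add_mul_sq_norm_le hL hf hs x y
  have hyx := hc.add_inner_gradient_add_mul_sq_norm_le hL hf hs y x
  rw [norm_sub_rev] at hxy
  have hinner : ⟪∇ f x - ∇ f y, x - y⟫ = -⟪∇ f x, y - x⟫ - ⟪∇ f y, x - y⟫ := by
    rw [inner_sub_left, ← neg_sub x y, inner_neg_right]; ring
  have hL' : (2 * L)⁻¹ = 2 * (4 * L)⁻¹ := by field_simp; norm_num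
  rw [hinner, hL']
  linarith

lemma ConvexOn.norm_gradient_sub_smul_gradient_le {L α : ℝ} (hL : 0 < L)
    (hc : ConvexOn ℝ Set.univ f) (hf : Differentiable ℝ f)
    (hs : ∀ x y, ‖∇ f x - ∇ f y‖ ≤ L * ‖x - y‖) (hα : 0 < α) (hαL : α * L ≤ 1) (x : E) :
    ‖∇ f (x - α • ∇ f x)‖ ≤ ‖∇ f x‖ := by
  set u := ∇ f x
  set h := u - ∇ f (x - α • u)
  have hcoco := hc.mul_sq_norm_gradient_sub_le_inner hL hf hs x (x - α • u)
  rw [sub_sub_cancel, real_inner_smul_right] at hcoco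
  have hhu : 0 ≤ ⟪h, u⟫ := by
    have : 0 ≤ α * ⟪h, u⟫ := le_trans (by positivity) hcoco
    exact nonneg_of_mul_nonneg_right (by linarith) hα
  have hsq : ‖h‖ ^ 2 ≤ 2 * ⟪h, u⟫ := by
    rw [inv_mul_le_iff₀ (by positivity)] at hcoco
    nlinarith
  simpa [h] using norm_sub_le_of_sq_norm_le_two_inner hsq

lemma ConvexOn.norm_id_sub_smul_fderiv_gradient_le_one {L α : ℝ} (hL : 0 < L)
    (hc : ConvexOn ℝ Set.univ f) (hf : Differentiable ℝ f)
    (hs : ∀ x y, ‖∇ f x - ∇ f y‖ ≤ L * ‖x - y‖) (hα : 0 < α) (hαL : α * L ≤ 1) {w : E}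
    (hd : DifferentiableAt ℝ (∇ f) w) :
    ‖ContinuousLinearMap.id ℝ E - α • fderiv ℝ (∇ f) w‖ ≤ 1 := by
  refine ContinuousLinearMap.opNorm_le_bound _ zero_le_one fun v => ?_
  have hcoco := mul_sq_norm_fderiv_apply_le_inner
    (hc.mul_sq_norm_gradient_sub_le_inner hL hf hs) hd v
  set Dv := fderiv ℝ (∇ f) w v
  rw [inv_mul_le_iff₀ (by positivity)] at hcoco
  have hnn : 0 ≤ ⟪Dv, v⟫ := by nlinarith [sq_nonneg ‖Dv‖]
  have hsq : ‖α • Dv‖ ^ 2 ≤ 2 * ⟪α • Dv, v⟫ := by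
    rw [norm_smul, Real.norm_of_nonneg hα.le, real_inner_smul_left]
    nlinarith [mul_le_mul_of_nonneg_left hcoco (sq_nonneg α),
      mul_le_mul_of_nonneg_right hαL (mul_nonneg hα.le hnn)]
  simpa using norm_sub_le_of_sq_norm_le_two_inner hsq

end

section Maml

variable {ι E : Type*} [Fintype ι] [NormedAddCommGroup E] [InnerProductSpace ℝ E]
  [CompleteSpace E]

noncomputable def mamlLoss (p : ι → ℝ) (α : ℝ) (f : ι → E → ℝ) (w : E) : ℝ :=
  ∑ i, p i * f i (w - α • ∇ (f i) w)

variable {p : ι → ℝ} {α : ℝ} {f : ι → E → ℝ}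

lemma hasFDerivAt_mamlLoss (hf : ∀ i, Differentiable ℝ (f i))
    {w : E} (hg : ∀ i, DifferentiableAt ℝ (∇ (f i)) w) :
    HasFDerivAt (mamlLoss p α f) (∑ i, p i • (fderiv ℝ (f i) (w - α • ∇ (f i) w)).comp
      (ContinuousLinearMap.id ℝ E - α • fderiv ℝ (∇ (f i)) w)) w :=
  HasFDerivAt.fun_sum fun i _ => ((hf i _).hasFDerivAt.comp w
    ((hasFDerivAt_id w).sub ((hg i).hasFDerivAt.const_smul α))).const_mul (p i)

lemma norm_gradient_mamlLoss_le {L : ℝ} (hp : ∀ i, 0 ≤ p i) (hL : 0 < L)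
    (hf : ∀ i, ContDiff ℝ 2 (f i)) (hc : ∀ i, ConvexOn ℝ Set.univ (f i))
    (hs : ∀ i x y, ‖∇ (f i) x - ∇ (f i) y‖ ≤ L * ‖x - y‖) (hα : 0 < α) (hαL : α * L ≤ 1)
    (w : E) : ‖∇ (mamlLoss p α f) w‖ ≤ ∑ i, p i * ‖∇ (f i) w‖ := by
  have hdiff i : Differentiable ℝ (f i) := (hf i).differentiable two_ne_zero
  have hgdiff i : Differentiable ℝ (∇ (f i)) := (hf i).differentiable_gradient_s8
  rw [← (InnerProductSpace.toDual ℝ E).norm_map, toDual_gradient,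
    (hasFDerivAt_mamlLoss hdiff fun i => hgdiff i w).fderiv]
  refine (norm_sum_le _ _).trans (Finset.sum_le_sum fun i _ => ?_)
  rw [norm_smul, Real.norm_of_nonneg (hp i)]
  gcongr
  · exact hp i
  calc _ ≤ ‖fderiv ℝ (f i) (w - α • ∇ (f i) w)‖ *
        ‖ContinuousLinearMap.id ℝ E - α • fderiv ℝ (∇ (f i)) w‖ :=
        ContinuousLinearMap.opNorm_comp_le _ _
    _ ≤ ‖∇ (f i) (w - α • ∇ (f i) w)‖ * 1 := by
        rw [← toDual_gradient, LinearIsometryEquiv.norm_map]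
        gcongr
        exact (hc i).norm_id_sub_smul_fderiv_gradient_le_one hL (hdiff i) (hs i) hα hαL
          (hgdiff i w)
    _ ≤ ‖∇ (f i) w‖ := by
        rw [mul_one]
        exact (hc i).norm_gradient_sub_smul_gradient_le hL (hdiff i) (hs i) hα hαL w

end Maml

theorem stmt_8_general {d M : ℕ} (f : Fin M → EuclideanSpace ℝ (Fin d) → ℝ) (p : Fin M → ℝ)
    (hp : ∀ i, 0 ≤ p i) (hp1 : ∑ i, p i = 1)
    (L σ α : ℝ) (hL : 0 < L) (hσ : 0 ≤ σ)
    (hf : ∀ i, ContDiff ℝ 2 (f i))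
    (hconv : ∀ i, ConvexOn ℝ Set.univ (f i))
    (hsmooth : ∀ i, ∀ w u : EuclideanSpace ℝ (Fin d),
      ‖gradient (f i) w - gradient (f i) u‖ ≤ L * ‖w - u‖)
    (favg : EuclideanSpace ℝ (Fin d) → ℝ)
    (hvar : ∀ w : EuclideanSpace ℝ (Fin d),
      ∑ i, p i * ‖gradient (f i) w - gradient favg w‖ ^ 2 ≤ σ ^ 2)
    (F : EuclideanSpace ℝ (Fin d) → ℝ)
    (hF : F = fun w => ∑ i, p i * f i (w - α • gradient (f i) w))
    (hα : 0 < α) (hα2 : α ≤ 1 / L)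
    (w : EuclideanSpace ℝ (Fin d)) :
    ‖gradient F w‖ ≤ σ + ‖gradient favg w‖ := by
  have hαL : α * L ≤ 1 := (le_div_iff₀ hL).mp hα2
  rw [show F = mamlLoss p α f from hF]
  exact (norm_gradient_mamlLoss_le hp hL hf hconv hsmooth hα hαL w).trans
    (sum_mul_norm_le_add_of_sum_mul_sq_norm_sub_le hp hp1 hσ (hvar w))

/-- for twice differentiable, convex, `L`-smooth task losses with gradient
variance bounded by `σ²` and `0 < α ≤ 1/L`, the MAML loss satisfies
`‖∇F(w)‖ ≤ σ + ‖∇f(w)‖` for every `w`. -/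
theorem stmt_8 {d M : ℕ} (f : Fin M → EuclideanSpace ℝ (Fin d) → ℝ) (p : Fin M → ℝ)
    (hp : ∀ i, 0 ≤ p i) (hp1 : ∑ i, p i = 1)
    (L σ α : ℝ) (hL : 0 < L) (hσ : 0 ≤ σ)
    (hf : ∀ i, ContDiff ℝ 2 (f i))
    (hconv : ∀ i, ConvexOn ℝ Set.univ (f i))
    (hsmooth : ∀ i, ∀ w u : EuclideanSpace ℝ (Fin d),
      ‖gradient (f i) w - gradient (f i) u‖ ≤ L * ‖w - u‖)
    (favg : EuclideanSpace ℝ (Fin d) → ℝ) (hfavg : favg = fun w => ∑ i, p i * f i w)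
    (hvar : ∀ w : EuclideanSpace ℝ (Fin d),
      ∑ i, p i * ‖gradient (f i) w - gradient favg w‖ ^ 2 ≤ σ ^ 2)
    (F : EuclideanSpace ℝ (Fin d) → ℝ)
    (hF : F = fun w => ∑ i, p i * f i (w - α • gradient (f i) w))
    (hα : 0 < α) (hα2 : α ≤ 1 / L)
    (w : EuclideanSpace ℝ (Fin d)) :
    ‖gradient F w‖ ≤ σ + ‖gradient favg w‖ :=
  stmt_8_general f p hp hp1 L σ α hL hσ hf hconv hsmooth favg hvar F hF hα hα2 w
end
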